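/- arXiv:1503.03842 — 3 statements merged into one kernel-verified Lean document; each statement's English description precedes it below -/
import Mathlib

section
/- Let a, b, c, d be integers with a ≤ c and b ≤ d, let m ≥ 1, and let S_i = (x_i, y_i) ∈ ℤ², i = 1, ..., m, be lattice points with a ≤ x_i ≤ c and b ≤ y_i ≤ d for all i. Then every lattice path P from (a,b) to (c,d) which stays weakly south-east of S_i for every i = 1, ..., m satisfies NE(P) ≤ min{c − a, d − b, c − b − max{x_i − y_i : 1 ≤ i ≤ m}}. -/
/-- A lattice path from `A` to `B`: a list of points of `ℤ × ℤ` whose consecutive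
differences are the unit steps `(1,0)` or `(0,1)`, starting at `A` and ending at `B`. -/
def IsLatticePathFrom (P : List (ℤ × ℤ)) (A B : ℤ × ℤ) : Prop :=
  P.Chain' (fun p q => q = (p.1 + 1, p.2) ∨ q = (p.1, p.2 + 1)) ∧
    P.head? = some A ∧ P.getLast? = some B

/-- The list of NE-turns of a lattice path: the points of the path that are the end
point of a vertical step and at the same time the starting point of a horizontal step. -/
def NETurns : List (ℤ × ℤ) → List (ℤ × ℤ)
  | p :: q :: r :: rest =>
      (if q = (p.1, p.2 + 1) ∧ r = (q.1 + 1, q.2) then [q] else []) ++ NETurns (q :: r :: rest)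
  | _ => []

/-- `(x,y)` lies weakly south-east of `S` if `x ≥ S.1` or `y ≤ S.2`. -/
def WeaklySE (p S : ℤ × ℤ) : Prop := S.1 ≤ p.1 ∨ p.2 ≤ S.2

/-- `(x,y)` lies weakly north-west of `T` if `x ≤ T.1` or `y ≥ T.2`. -/
def WeaklyNW (p T : ℤ × ℤ) : Prop := p.1 ≤ T.1 ∨ T.2 ≤ p.2

/-- A path stays weakly south-east of `S` if every point on it does. -/
def StaysSE (P : List (ℤ × ℤ)) (S : ℤ × ℤ) : Prop := ∀ p ∈ P, WeaklySE p S

/-- A path stays weakly north-west of `T` if every point on it does. -/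
def StaysNW (P : List (ℤ × ℤ)) (T : ℤ × ℤ) : Prop := ∀ p ∈ P, WeaklyNW p T

/-- A family of lattice paths is non-intersecting if no two of its members share a point. -/
def NonIntersecting {n : ℕ} (F : Fin n → List (ℤ × ℤ)) : Prop :=
  ∀ i j, i ≠ j → ∀ p, p ∈ F i → p ∉ F j

/-
The NE-turns of a lattice path, read in order, go strictly up and strictly to the right (a turn is
left by a horizontal step and the next one is entered by a vertical step), so their
x-coordinates are distinct integers in `[a, c)` and their y-coordinates distinct integers in
`(b, d]`. For the third bound fix a point `S = (x, y)` attaining `max (xᵢ - yᵢ)`: a turn weakly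
south-east of `S` has either height in `(b, y]` or abscissa in `[x, c)`, and the turns of each kind
are again separated by their heights, resp. abscissae, giving at most `(y - b) + (c - x)` turns.
-/

abbrev Step (p q : ℤ × ℤ) : Prop := q = (p.1 + 1, p.2) ∨ q = (p.1, p.2 + 1)

abbrev StrictlyNE (p q : ℤ × ℤ) : Prop := p.1 < q.1 ∧ p.2 < q.2

lemma Step.le {p q : ℤ × ℤ} (h : Step p q) : p ≤ q := by
  rcases h with rfl | rfl <;> simp [Prod.le_def]

lemma pairwise_le_of_chain_step {P : List (ℤ × ℤ)} (h : P.IsChain Step) : P.Pairwise (· ≤ ·) :=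
  List.isChain_iff_pairwise.mp (h.imp fun _ _ => Step.le)

lemma head_le_of_chain_step {p q : ℤ × ℤ} {l : List (ℤ × ℤ)} (h : (p :: l).IsChain Step)
    (hq : q ∈ p :: l) : p ≤ q := by
  rcases List.mem_cons.mp hq with rfl | hq
  · exact le_rfl
  · exact List.rel_of_pairwise_cons (pairwise_le_of_chain_step h) hq

lemma IsLatticePathFrom.le_of_mem {P : List (ℤ × ℤ)} {A B p : ℤ × ℤ}
    (hP : IsLatticePathFrom P A B) (hp : p ∈ P) : A ≤ p ∧ p ≤ B := by
  obtain ⟨hchain, hA, hB⟩ := hP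
  have hle := pairwise_le_of_chain_step hchain
  obtain ⟨l, rfl⟩ := List.head?_eq_some_iff.mp hA
  obtain ⟨l', hl'⟩ := List.getLast?_eq_some_iff.mp hB
  refine ⟨head_le_of_chain_step hchain hp, ?_⟩
  rw [hl'] at hp hle
  rcases List.mem_append.mp hp with hp | hp
  · exact (List.pairwise_append.mp hle).2.2 p hp B (List.mem_singleton_self B)
  · exact (List.mem_singleton.mp hp).le

lemma infix_of_mem_NETurns : ∀ {P : List (ℤ × ℤ)} {t : ℤ × ℤ}, t ∈ NETurns P →
    [(t.1, t.2 - 1), t, (t.1 + 1, t.2)] <:+: P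
  | p :: q :: r :: rest, t, ht => by
    simp only [NETurns, List.mem_append] at ht
    rcases ht with ht | ht
    · split_ifs at ht with hturn
      · obtain rfl := List.mem_singleton.mp ht
        obtain ⟨rfl, rfl⟩ := hturn
        exact ⟨[], rest, by simp⟩
      · simp at ht
    · exact List.infix_cons (infix_of_mem_NETurns ht)
  | [], _, ht | [_], _, ht | [_, _], _, ht => by simp [NETurns] at ht

lemma pairwise_strictlyNE_NETurns : ∀ {P : List (ℤ × ℤ)}, P.IsChain Step →
    (NETurns P).Pairwise StrictlyNE
  | p :: q :: r :: rest, hP => by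
    have htail : (q :: r :: rest).IsChain Step := hP.tail
    simp only [NETurns, List.pairwise_append]
    refine ⟨by split_ifs <;> simp, pairwise_strictlyNE_NETurns htail, ?_⟩
    intro s hs t ht
    split_ifs at hs with hturn
    · obtain rfl := List.mem_singleton.mp hs
      have hsub := (infix_of_mem_NETurns ht).subset
      have hpred : s ≤ (t.1, t.2 - 1) := head_le_of_chain_step htail (hsub (by simp))
      have hst : t ∈ r :: rest := by
        rcases List.mem_cons.mp (hsub (by simp : t ∈ _)) with rfl | h
        · simp [Prod.le_def] at hpred
        · exact h
      have hr : r ≤ t := head_le_of_chain_step htail.tail hst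
      rw [hturn.2] at hr
      rw [Prod.le_def] at hpred hr
      exact ⟨by omega, by omega⟩
    · simp at hs
  | [], _ | [_], _ | [_, _], _ => by simp [NETurns]

lemma IsLatticePathFrom.bounds_of_mem_NETurns {P : List (ℤ × ℤ)} {A B t : ℤ × ℤ}
    (hP : IsLatticePathFrom P A B) (ht : t ∈ NETurns P) :
    A.1 ≤ t.1 ∧ t.1 < B.1 ∧ A.2 < t.2 ∧ t.2 ≤ B.2 := by
  have hsub := (infix_of_mem_NETurns ht).subset
  have hpred := (hP.le_of_mem (hsub (by simp : (t.1, t.2 - 1) ∈ _))).1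
  have hsucc := (hP.le_of_mem (hsub (by simp : (t.1 + 1, t.2) ∈ _))).2
  rw [Prod.le_def] at hpred hsucc
  exact ⟨hpred.1, by omega, by omega, hsucc.2⟩

lemma List.length_le_of_pairwise_lt {α : Type*} {l : List α} {g : α → ℤ} {lo hi : ℤ}
    (hlohi : lo ≤ hi) (hl : l.Pairwise (g · < g ·)) (hg : ∀ t ∈ l, g t ∈ Set.Ico lo hi) :
    (l.length : ℤ) ≤ hi - lo := by
  classical
  have hnodup : (l.map g).Nodup := (List.pairwise_map.mpr hl).imp ne_of_lt
  have hsub : (l.map g).toFinset ⊆ Finset.Ico lo hi := by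
    intro z hz
    obtain ⟨t, ht, rfl⟩ := List.mem_map.mp (List.mem_toFinset.mp hz)
    simpa using hg t ht
  have hcard := Finset.card_le_card hsub
  rw [List.toFinset_card_of_nodup hnodup, List.length_map, Int.card_Ico] at hcard
  omega

lemma length_le_of_pairwise_strictlyNE_of_weaklySE {l : List (ℤ × ℤ)} {b c : ℤ} {S : ℤ × ℤ}
    (hl : l.Pairwise StrictlyNE) (hb : ∀ t ∈ l, b < t.2) (hc : ∀ t ∈ l, t.1 < c)
    (hS : ∀ t ∈ l, WeaklySE t S) (hbS : b ≤ S.2) (hSc : S.1 ≤ c) :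
    (l.length : ℤ) ≤ c - b - (S.1 - S.2) := by
  set low := l.filter fun t => t.2 ≤ S.2
  set high := l.filter fun t => ¬ t.2 ≤ S.2
  have hlow : (low.length : ℤ) ≤ S.2 + 1 - (b + 1) :=
    List.length_le_of_pairwise_lt (g := Prod.snd) (by omega)
      ((hl.sublist List.filter_sublist).imp And.right) fun t ht => by
        obtain ⟨htl, hty⟩ := List.mem_filter.mp ht
        exact ⟨hb t htl, by simpa using hty⟩
  have hhigh : (high.length : ℤ) ≤ c - S.1 :=
    List.length_le_of_pairwise_lt (g := Prod.fst) hSc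
      ((hl.sublist List.filter_sublist).imp And.left) fun t ht => by
        obtain ⟨htl, hty⟩ := List.mem_filter.mp ht
        exact ⟨(hS t htl).resolve_right (by simpa using hty), hc t htl⟩
  have hsplit : l.length = low.length + high.length := by
    simp only [low, high, decide_not]
    exact List.length_eq_length_filter_add _
  omega

theorem lemma1_upper_bound (a b c d : ℤ) (hac : a ≤ c) (hbd : b ≤ d)
    (m : ℕ) (hm : 1 ≤ m) (x y : Fin m → ℤ)
    (hx : ∀ i, a ≤ x i ∧ x i ≤ c) (hy : ∀ i, b ≤ y i ∧ y i ≤ d)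
    (P : List (ℤ × ℤ)) (hP : IsLatticePathFrom P (a, b) (c, d))
    (hSE : ∀ i, StaysSE P (x i, y i)) :
    ((NETurns P).length : ℤ) ≤
      min (c - a) (min (d - b) (c - b - sSup (Set.range fun i => x i - y i))) := by
  have hturns := pairwise_strictlyNE_NETurns hP.1
  have hbox := fun t (ht : t ∈ NETurns P) => hP.bounds_of_mem_NETurns ht
  have : Nonempty (Fin m) := ⟨⟨0, hm⟩⟩
  obtain ⟨i, hi⟩ := (Set.range_nonempty fun i => x i - y i).csSup_mem (Set.finite_range _)
  rw [← hi]
  refine le_min ?_ (le_min ?_ ?_)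
  · exact List.length_le_of_pairwise_lt (g := Prod.fst) hac (hturns.imp And.left)
      fun t ht => ⟨(hbox t ht).1, (hbox t ht).2.1⟩
  · have := List.length_le_of_pairwise_lt (g := Prod.snd) (by omega : b + 1 ≤ d + 1)
      (hturns.imp And.right) fun t ht => ⟨(hbox t ht).2.2.1, by simpa using (hbox t ht).2.2.2⟩
    omega
  · exact length_le_of_pairwise_strictlyNE_of_weaklySE hturns (fun t ht => (hbox t ht).2.2.1)
      (fun t ht => (hbox t ht).2.1) (fun t ht => hSE i t ((infix_of_mem_NETurns ht).subset
        (by simp))) (hy i).1 (hx i).2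
end

section
/- Let a, b, c, d be integers with a ≤ c and b ≤ d, let m ≥ 1, and let S_i = (x_i, y_i) ∈ ℤ², i = 1, ..., m, be lattice points with a ≤ x_i ≤ c and b ≤ y_i ≤ d for all i. Then there exists a lattice path P from (a,b) to (c,d) which stays weakly south-east of S_i for every i = 1, ..., m and satisfies NE(P) = min{c − a, d − b, c − b − max{x_i − y_i : 1 ≤ i ≤ m}}. -/
/-!
Take `k` to be the claimed minimum. The path runs east along the bottom row `y = b`, climbs a
staircase of `k` north–east step pairs (one NE-turn each) and then runs north along the right
column `x = c`. The bottom row and the right column are weakly south-east of every `S_i`. The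
staircase satisfies `x - y ≥ c - b - k - 1`, and every point with `x - y ≥ x_i - y_i - 1` is
weakly south-east of `S_i`; the bounds match because `k ≤ c - b - (x_i - y_i)`.
-/

def stairPath : ℤ × ℤ → ℕ → ℕ → ℕ → List (ℤ × ℤ)
  | p, e + 1, k, n => p :: stairPath (p.1 + 1, p.2) e k n
  | p, 0, k + 1, n => p :: (p.1, p.2 + 1) :: stairPath (p.1 + 1, p.2 + 1) 0 k n
  | p, 0, 0, n + 1 => p :: stairPath (p.1, p.2 + 1) 0 0 n
  | p, 0, 0, 0 => [p]

theorem NETurns_cons (p : ℤ × ℤ) (L : List (ℤ × ℤ)) :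
    NETurns (p :: L) =
      (if L.head? = some (p.1, p.2 + 1) ∧ L.tail.head? = some (p.1 + 1, p.2 + 1)
        then [(p.1, p.2 + 1)] else []) ++ NETurns L := by
  match L with
  | [] | [_] => simp [NETurns]
  | q :: r :: rest =>
    by_cases hq : q = (p.1, p.2 + 1)
    · subst hq; simp [NETurns]
    · simp [NETurns, hq]

namespace stairPath

theorem head? (p : ℤ × ℤ) (e k n : ℕ) : (stairPath p e k n).head? = some p := by
  fun_cases stairPath p e k n <;> rfl

theorem getLast? (p : ℤ × ℤ) (e k n : ℕ) :
    (stairPath p e k n).getLast? = some (p.1 + e + k, p.2 + k + n) := by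
  fun_induction stairPath p e k n <;> grind [List.getLast?_cons]

theorem isChain (p : ℤ × ℤ) (e k n : ℕ) :
    (stairPath p e k n).IsChain fun p q => q = (p.1 + 1, p.2) ∨ q = (p.1, p.2 + 1) := by
  fun_induction stairPath p e k n <;> simp_all [List.isChain_cons, head?]

theorem length_NETurns (p : ℤ × ℤ) (e k n : ℕ) :
    (NETurns (stairPath p e k n)).length = k := by
  fun_induction stairPath p e k n with
  | case3 p n ih => cases n <;> simp_all [stairPath, NETurns_cons, head?]
  | case4 => rfl
  | _ => simp_all [NETurns_cons, head?]

theorem bounds_of_mem {p q : ℤ × ℤ} {e k n : ℕ} (hq : q ∈ stairPath p e k n) :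
    p.1 ≤ q.1 ∧ q.1 ≤ p.1 + e + k ∧
      (q.2 = p.2 ∨ p.1 + e - p.2 - 1 ≤ q.1 - q.2 ∨ q.1 = p.1 + e + k) := by
  fun_induction stairPath p e k n <;> grind

theorem staysSE {p S : ℤ × ℤ} {e k n : ℕ} (hbot : p.2 ≤ S.2)
    (hdiag : S.1 - S.2 ≤ p.1 + e - p.2) (hright : S.1 ≤ p.1 + e + k) :
    StaysSE (stairPath p e k n) S := fun q hq => by
  have := bounds_of_mem hq
  unfold WeaklySE
  omega

end stairPath

theorem exists_latticePath_length_NETurns_eq (a b c d : ℤ) (k : ℕ) (hkc : k ≤ c - a)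
    (hkd : k ≤ d - b) :
    ∃ P : List (ℤ × ℤ), IsLatticePathFrom P (a, b) (c, d) ∧
      (∀ S : ℤ × ℤ, b ≤ S.2 → S.1 ≤ c → S.1 - S.2 ≤ c - b - k → StaysSE P S) ∧
      (NETurns P).length = k := by
  refine ⟨stairPath (a, b) (c - a - k).toNat k (d - b - k).toNat,
    ⟨stairPath.isChain .., stairPath.head? .., ?_⟩,
    fun S hbot hright hdiag =>
      stairPath.staysSE hbot (by dsimp only; omega) (by dsimp only; omega),
    stairPath.length_NETurns ..⟩
  rw [stairPath.getLast?]
  simp only [Option.some.injEq, Prod.mk.injEq]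
  omega

theorem lemma1_existence (a b c d : ℤ) (hac : a ≤ c) (hbd : b ≤ d)
    (m : ℕ) (hm : 1 ≤ m) (x y : Fin m → ℤ)
    (hx : ∀ i, a ≤ x i ∧ x i ≤ c) (hy : ∀ i, b ≤ y i ∧ y i ≤ d) :
    ∃ P : List (ℤ × ℤ), IsLatticePathFrom P (a, b) (c, d) ∧
      (∀ i, StaysSE P (x i, y i)) ∧
      ((NETurns P).length : ℤ) =
        min (c - a) (min (d - b) (c - b - sSup (Set.range fun i => x i - y i))) := by
  set M := sSup (Set.range fun i => x i - y i)
  have le_M (i : Fin m) : x i - y i ≤ M := le_csSup (Set.finite_range _).bddAbove ⟨i, rfl⟩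
  have M_le : M ≤ c - b := by
    have : Nonempty (Fin m) := ⟨⟨0, hm⟩⟩
    refine csSup_le (Set.range_nonempty _) ?_
    rintro _ ⟨i, rfl⟩
    linarith [(hx i).2, (hy i).1]
  set k := min (c - a) (min (d - b) (c - b - M))
  have hk : 0 ≤ k := by omega
  obtain ⟨P, hP, hSE, hNE⟩ :=
    exists_latticePath_length_NETurns_eq a b c d k.toNat (by omega) (by omega)
  refine ⟨P, hP, fun i => hSE _ (hy i).1 (hx i).2 ?_, by omega⟩
  have := le_M i
  omega
end

section
/- Let K be a field, A, B nonnegative integers, Λ ⊆ {0,...,A} × {0,...,B} a ladder with associated ladder region L, and M = [u_1,...,u_n | v_1,...,v_n] a bivector of positive integers with u_1 < ... < u_n ≤ A+1 and v_1 < ... < v_n ≤ B+1. Let A^{(i)}, E^{(i)}, L^{(i)}, B^{(i)} be as in the context. If for each i = 1, ..., n the set B^{(i)} has exactly E^{(i)}_1 − A^{(i)}_1 + E^{(i)}_2 − A^{(i)}_2 + 1 elements, then the cardinality d of ⋃_{i=1}^n B^{(i)} equals (A + B + 3)n − Σ_{i=1}^n (u_i + v_i); in particular, the sets B^{(1)},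 ..., B^{(n)} are pairwise disjoint. -/
/-- `Λ` is a ladder: together with any two positions `(i,j) ≤ (i',j')` it contains the
whole interval between them. -/
def IsLadder {A B : ℕ} (Λ : Set (Fin (A + 1) × Fin (B + 1))) : Prop :=
  ∀ p ∈ Λ, ∀ p' ∈ Λ, p.1 ≤ p'.1 → p.2 ≤ p'.2 →
    ∀ (s : Fin (A + 1)) (t : Fin (B + 1)),
      p.1 ≤ s → s ≤ p'.1 → p.2 ≤ t → t ≤ p'.2 → (s, t) ∈ Λ

/-- The ladder region associated with a ladder `Λ`: the set of points `(j, A−i)` for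
`(i,j) ∈ Λ`. -/
def ladderRegion {A B : ℕ} (Λ : Set (Fin (A + 1) × Fin (B + 1))) : Set (ℤ × ℤ) :=
  {p | ∃ q ∈ Λ, p = (((q.2 : ℕ) : ℤ), (A : ℤ) - ((q.1 : ℕ) : ℤ))}

open Classical in
/-- The matrix `Y` associated with a ladder `Λ`: the entry at a position of `Λ` is the
corresponding variable of the polynomial ring `K[Y]`, all other entries are `0`. -/
noncomputable def ladderMatrix (K : Type*) [Field K] {A B : ℕ}
    (Λ : Set (Fin (A + 1) × Fin (B + 1))) :
    Matrix (Fin (A + 1)) (Fin (B + 1)) (MvPolynomial {q // q ∈ Λ} K) :=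
  fun i j => if h : (i, j) ∈ Λ then MvPolynomial.X ⟨(i, j), h⟩ else 0

/-- The ladder determinantal ideal cogenerated by the bivector
`M = [u 1,...,u n | v 1,...,v n]` (with the conventions `u (n+1) = A+2`, `v (n+1) = B+2`
imposed as hypotheses in the theorems): it is generated, for `1 ≤ t ≤ n+1`, by the `t×t`
minors of `Y` all of whose positions lie in `Λ` and whose rows all lie among the last
`u t − 1` rows, or whose columns all lie among the last `v t − 1` columns. -/
noncomputable def ladderIdeal (K : Type*) [Field K] {A B : ℕ}
    (Λ : Set (Fin (A + 1) × Fin (B + 1))) (n : ℕ) (u v : ℕ → ℕ) :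
    Ideal (MvPolynomial {q // q ∈ Λ} K) :=
  Ideal.span {f | ∃ t : ℕ, 1 ≤ t ∧ t ≤ n + 1 ∧
    ∃ (r : Fin t → Fin (A + 1)) (c : Fin t → Fin (B + 1)),
      StrictMono r ∧ StrictMono c ∧ (∀ k l, (r k, c l) ∈ Λ) ∧
      ((∀ k, A + 2 ≤ (r k : ℕ) + u t) ∨ (∀ l, B + 2 ≤ (c l : ℕ) + v t)) ∧
      f = (((ladderMatrix K Λ).submatrix r c).det)}

/-- The dimension of the degree-`ℓ` homogeneous component of the quotient of a polynomial
ring by a (homogeneous) ideal `I`: the image of the space of homogeneous polynomials of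
degree `ℓ` in the quotient. -/
noncomputable def quotDim (K : Type*) [Field K] {σ : Type*}
    (I : Ideal (MvPolynomial σ K)) (ℓ : ℕ) : ℕ :=
  Module.finrank K
    (Submodule.map (Ideal.Quotient.mkₐ K I).toLinearMap
      (MvPolynomial.homogeneousSubmodule σ K ℓ))

/-- The Hilbert series `Σ_ℓ dim_K (R_M(Y))_ℓ zˡ`, as a power series over `ℤ`. -/
noncomputable def hilbertSeries (K : Type*) [Field K] {σ : Type*}
    (I : Ideal (MvPolynomial σ K)) : PowerSeries ℤ :=
  PowerSeries.mk fun ℓ => (quotDim K I ℓ : ℤ)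

/-- The recursively defined regions `L⁽ⁱ⁾` of Theorem 5, counted downwards from
`L⁽ⁿ⁺¹⁾ = L`; `Lseq L E1 A2 j` is `L⁽ⁿ⁺¹⁻ʲ⁾`, where `E1 j` resp. `A2 j` are the first
coordinate of `E⁽ⁿ⁻ʲ⁾` resp. the second coordinate of `A⁽ⁿ⁻ʲ⁾`. -/
def Lseq (L : Set (ℤ × ℤ)) (E1 A2 : ℕ → ℤ) : ℕ → Set (ℤ × ℤ)
  | 0 => L
  | j + 1 => {P ∈ Lseq L E1 A2 j |
      P.1 ≤ E1 j ∧ A2 j ≤ P.2 ∧ (P.1 + 1, P.2 - 1) ∈ Lseq L E1 A2 j}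

/-- The region `L⁽ⁱ⁾` of Theorem 5 (for `1 ≤ i ≤ n+1`), for a ladder `Λ` with ladder
region `L` and a bivector given by `u`, `v` (indexed `1,...,n`). -/
def ladderLset (A B : ℕ) (Λ : Set (Fin (A + 1) × Fin (B + 1))) (n : ℕ)
    (u v : ℕ → ℕ) (i : ℕ) : Set (ℤ × ℤ) :=
  Lseq (ladderRegion Λ) (fun j => (B : ℤ) - (v (j + 1) : ℤ) + 1)
    (fun j => (u (j + 1) : ℤ) - 1) (n + 1 - i)

/-- The set `B⁽ⁱ⁾` of Theorem 5 (for `1 ≤ i ≤ n`). -/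
def ladderBset (A B : ℕ) (Λ : Set (Fin (A + 1) × Fin (B + 1))) (n : ℕ)
    (u v : ℕ → ℕ) (i : ℕ) : Set (ℤ × ℤ) :=
  {P ∈ ladderLset A B Λ n u v i | (P.1 + 1, P.2 - 1) ∉ ladderLset A B Λ n u v i}

/-- The families of non-intersecting lattice paths appearing in Theorem 5: `P i` runs
from `A⁽ⁱ⁾ = (0, u (n−i+1) − 1)` to `E⁽ⁱ⁾ = (B − v (n−i+1) + 1, A)` and has all its
NE-turns in `L⁽ⁱ⁾ ∖ B⁽ⁱ⁾` (here the index `i : Fin n` corresponds to `i+1`). -/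
def AdmissibleFamily (A B : ℕ) (Λ : Set (Fin (A + 1) × Fin (B + 1))) (n : ℕ)
    (u v : ℕ → ℕ) (F : Fin n → List (ℤ × ℤ)) : Prop :=
  NonIntersecting F ∧
  (∀ i : Fin n, IsLatticePathFrom (F i)
    ((0 : ℤ), (u (n - (i : ℕ)) : ℤ) - 1)
    ((B : ℤ) - (v (n - (i : ℕ)) : ℤ) + 1, (A : ℤ))) ∧
  (∀ i : Fin n, ∀ pt ∈ NETurns (F i),
    pt ∈ ladderLset A B Λ n u v ((i : ℕ) + 1) \ ladderBset A B Λ n u v ((i : ℕ) + 1))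

/-- The generating function `GF = Σ_𝐏 z^{NE(𝐏)}` over all families of non-intersecting
lattice paths as in Theorem 5, as a power series over `ℤ`. -/
noncomputable def pathGF (A B : ℕ) (Λ : Set (Fin (A + 1) × Fin (B + 1))) (n : ℕ)
    (u v : ℕ → ℕ) : PowerSeries ℤ :=
  PowerSeries.mk fun k =>
    (Nat.card {F : Fin n → List (ℤ × ℤ) // AdmissibleFamily A B Λ n u v F ∧
      (∑ i : Fin n, (NETurns (F i)).length) = k} : ℤ)

/-!
Every point of `L⁽ⁱ⁾` has its south-east neighbour in `L⁽ʲ⁾` whenever `i < j`, while the points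
of `B⁽ʲ⁾` are exactly those of `L⁽ʲ⁾` without it; hence the `B⁽ⁱ⁾` are pairwise disjoint, and,
being finite subsets of `L`, `d` is the sum of their prescribed cardinalities.
-/

theorem Lseq_antitone (L : Set (ℤ × ℤ)) (E1 A2 : ℕ → ℤ) : Antitone (Lseq L E1 A2) :=
  antitone_nat_of_succ_le fun _ _ hP => hP.1

theorem Lseq_subset (L : Set (ℤ × ℤ)) (E1 A2 : ℕ → ℤ) (k : ℕ) : Lseq L E1 A2 k ⊆ L :=
  Lseq_antitone L E1 A2 (Nat.zero_le k)

theorem Lseq_shift_mem {L : Set (ℤ × ℤ)} {E1 A2 : ℕ → ℤ} {j k : ℕ} (hjk : j < k)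
    {P : ℤ × ℤ} (hP : P ∈ Lseq L E1 A2 k) : (P.1 + 1, P.2 - 1) ∈ Lseq L E1 A2 j :=
  (Lseq_antitone L E1 A2 hjk hP).2.2.2

theorem ladderRegion_finite {A B : ℕ} (Λ : Set (Fin (A + 1) × Fin (B + 1))) :
    (ladderRegion Λ).Finite := by
  refine (Λ.toFinite.image fun q => (((q.2 : ℕ) : ℤ), (A : ℤ) - ((q.1 : ℕ) : ℤ))).subset ?_
  rintro _ ⟨q, hq, rfl⟩
  exact ⟨q, hq, rfl⟩

theorem ladderBset_finite (A B : ℕ) (Λ : Set (Fin (A + 1) × Fin (B + 1))) (n : ℕ)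
    (u v : ℕ → ℕ) (i : ℕ) : (ladderBset A B Λ n u v i).Finite :=
  (ladderRegion_finite Λ).subset fun _ hP => Lseq_subset _ _ _ _ hP.1

theorem ladderBset_disjoint_of_lt (A B : ℕ) (Λ : Set (Fin (A + 1) × Fin (B + 1))) (n : ℕ)
    (u v : ℕ → ℕ) {i j : ℕ} (hi : i ≤ n) (hij : i < j) :
    Disjoint (ladderBset A B Λ n u v i) (ladderBset A B Λ n u v j) :=
  Set.disjoint_left.2 fun _ hPi hPj => hPj.2 (Lseq_shift_mem (by omega) hPi.1)

theorem ladderBset_disjoint (A B : ℕ) (Λ : Set (Fin (A + 1) × Fin (B + 1))) (n : ℕ)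
    (u v : ℕ → ℕ) {i j : ℕ} (hi : i ≤ n) (hj : j ≤ n) (hij : i ≠ j) :
    Disjoint (ladderBset A B Λ n u v i) (ladderBset A B Λ n u v j) := by
  rcases hij.lt_or_gt with hij | hji
  · exact ladderBset_disjoint_of_lt A B Λ n u v hi hij
  · exact (ladderBset_disjoint_of_lt A B Λ n u v hj hji).symm

theorem Fin.sum_univ_sub_eq_sum_Icc {M : Type*} [AddCommMonoid M] (f : ℕ → M) (n : ℕ) :
    ∑ i : Fin n, f (n - i) = ∑ i ∈ Finset.Icc 1 n, f i := by
  refine Finset.sum_bij' (fun i _ => n - i) (fun j hj => ⟨n - j, ?_⟩)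
    (fun i _ => ?_) (fun _ _ => Finset.mem_univ _) (fun i _ => Fin.ext ?_) (fun j hj => ?_)
    (fun _ _ => rfl) <;>
  simp only [Finset.mem_Icc] at * <;> grind

theorem remark_d_formula_general (A B n : ℕ)
    (Λ : Set (Fin (A + 1) × Fin (B + 1)))
    (u v : ℕ → ℕ)
    (hcard : ∀ i, 1 ≤ i → i ≤ n →
      ((ladderBset A B Λ n u v i).ncard : ℤ) =
        (((B : ℤ) - (v (n - i + 1) : ℤ) + 1) - 0) +
          ((A : ℤ) - ((u (n - i + 1) : ℤ) - 1)) + 1) :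
    (((⋃ i : Fin n, ladderBset A B Λ n u v ((i : ℕ) + 1)).ncard : ℤ) =
        ((A : ℤ) + (B : ℤ) + 3) * n -
          ∑ i ∈ Finset.Icc 1 n, ((u i : ℤ) + (v i : ℤ))) ∧
      (∀ i j, 1 ≤ i → i ≤ n → 1 ≤ j → j ≤ n → i ≠ j →
        ladderBset A B Λ n u v i ∩ ladderBset A B Λ n u v j = ∅) := by
  refine ⟨?_, fun i j _ hi _ hj hij => (ladderBset_disjoint A B Λ n u v hi hj hij).inter_eq⟩
  have hcard_fin : ∀ i : Fin n, ((ladderBset A B Λ n u v (i + 1)).ncard : ℤ) =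
      (A + B + 3) - ((u (n - i) : ℤ) + v (n - i)) := fun i => by
    rw [hcard (i + 1) (by omega) (by omega), show n - (i + 1) + 1 = n - i by omega]
    ring
  rw [Set.ncard_iUnion_of_finite (fun i => ladderBset_finite A B Λ n u v _)
      (fun i j hij => ladderBset_disjoint A B Λ n u v i.isLt j.isLt
        (by simpa [Fin.ext_iff] using hij)),
    finsum_eq_sum_of_fintype, Nat.cast_sum, Finset.sum_congr rfl fun i _ => hcard_fin i,
    Finset.sum_sub_distrib, Fin.sum_univ_sub_eq_sum_Icc (fun i => (u i : ℤ) + v i)]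
  simp [mul_comm]

theorem remark_d_formula (A B n : ℕ) (hn : 1 ≤ n)
    (Λ : Set (Fin (A + 1) × Fin (B + 1))) (hΛ : IsLadder Λ)
    (u v : ℕ → ℕ)
    (hu_mono : ∀ i j, 1 ≤ i → i < j → j ≤ n → u i < u j)
    (hv_mono : ∀ i j, 1 ≤ i → i < j → j ≤ n → v i < v j)
    (hu_range : ∀ i, 1 ≤ i → i ≤ n → 1 ≤ u i ∧ u i ≤ A + 1)
    (hv_range : ∀ i, 1 ≤ i → i ≤ n → 1 ≤ v i ∧ v i ≤ B + 1)
    (hcard : ∀ i, 1 ≤ i → i ≤ n →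
      ((ladderBset A B Λ n u v i).ncard : ℤ) =
        (((B : ℤ) - (v (n - i + 1) : ℤ) + 1) - 0) +
          ((A : ℤ) - ((u (n - i + 1) : ℤ) - 1)) + 1) :
    (((⋃ i : Fin n, ladderBset A B Λ n u v ((i : ℕ) + 1)).ncard : ℤ) =
        ((A : ℤ) + (B : ℤ) + 3) * n -
          ∑ i ∈ Finset.Icc 1 n, ((u i : ℤ) + (v i : ℤ))) ∧
      (∀ i j, 1 ≤ i → i ≤ n → 1 ≤ j → j ≤ n → i ≠ j →
        ladderBset A B Λ n u v i ∩ ladderBset A B Λ n u v j = ∅) :=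
  remark_d_formula_general A B n Λ u v hcard
end
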